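/- Let V and W be vector spaces over ℂ, let T : V → V and S : W → W be ℂ-linear maps, and let m : V × V → W be a ℂ-bilinear map such that m(T v₁, T v₂) = S(m(v₁, v₂)) for all v₁, v₂ ∈ V. Assume: (i) m(v₁, v₂) ≠ 0 whenever v₁ ≠ 0 and v₂ ≠ 0; and (ii) S has no nonzero fixed vector, i.e. S w = w implies w = 0. Then for every ζ ∈ ℂ with |ζ| = 1, it is impossible that both ζ and its complex conjugate ζ̄ are eigenvalues of T; that is, there do not exist nonzero vectors v₁, v₂ ∈ V with T v₁ = ζ·v₁ and T v₂ = ζ̄·v₂. In particular, neither 1 nor −1 is an eigenvalue of T. -/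

import Mathlib

/-!
If `T v₁ = a • v₁` and `T v₂ = b • v₂`, then bilinearity and the intertwining relation give
`S (m v₁ v₂) = (a * b) • m v₁ v₂`. For `b = conj ζ` with `‖ζ‖ = 1` (in particular `a = b = ±1`)
this product is `1`, so `m v₁ v₂` is a fixed vector of `S`, hence zero, which is impossible for
nonzero `v₁, v₂`.
-/

section Intertwining

variable {R M N : Type*} [CommSemiring R] [AddCommMonoid M] [Module R M]
  [AddCommMonoid N] [Module R N] {T : M →ₗ[R] M} {S : N →ₗ[R] N} {m : M →ₗ[R] M →ₗ[R] N}

lemma apply_eq_mul_smul_of_intertwining (hcompat : ∀ x y, m (T x) (T y) = S (m x y))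
    {a b : R} {x y : M} (hx : T x = a • x) (hy : T y = b • y) :
    S (m x y) = (a * b) • m x y := by
  rw [← hcompat, hx, hy, LinearMap.map_smul₂, map_smul, smul_smul]

lemma not_exists_eigenvectors_of_mul_eq_one (hcompat : ∀ x y, m (T x) (T y) = S (m x y))
    (hnz : ∀ x y, x ≠ 0 → y ≠ 0 → m x y ≠ 0) (hfix : ∀ w, S w = w → w = 0)
    {a b : R} (hab : a * b = 1) :
    ¬∃ x y : M, x ≠ 0 ∧ y ≠ 0 ∧ T x = a • x ∧ T y = b • y := by
  rintro ⟨x, y, hx0, hy0, hx, hy⟩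
  have hS : S (m x y) = m x y := by
    rw [apply_eq_mul_smul_of_intertwining hcompat hx hy, hab, one_smul]
  exact hnz x y hx0 hy0 (hfix _ hS)

end Intertwining

lemma Complex.mul_conj_eq_one_of_norm_eq_one {ζ : ℂ} (hζ : ‖ζ‖ = 1) :
    ζ * (starRingEnd ℂ) ζ = 1 := by
  rw [Complex.mul_conj', hζ]
  norm_num

lemma Module.End.HasEigenvalue.exists_ne_zero_apply_eq_smul {R M : Type*} [CommRing R]
    [AddCommGroup M] [Module R M] {f : Module.End R M} {μ : R} (hμ : f.HasEigenvalue μ) :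
    ∃ v : M, v ≠ 0 ∧ f v = μ • v :=
  let ⟨v, hv, hv0⟩ := hμ.exists_hasEigenvector
  ⟨v, hv0, Module.End.mem_eigenspace_iff.mp hv⟩

/-- Linear-algebra core of the lemma that the spectrum of `φ̃*` on `H⁰(L)` is
disjoint from its conjugate: given a bilinear map `m` intertwining `T` and `S`,
with `m` nonvanishing on pairs of nonzero vectors and `S` having no nonzero fixed
vector, no unit complex number `ζ` and its conjugate are both eigenvalues of `T`;
in particular neither `1` nor `-1` is an eigenvalue of `T`. -/
theorem no_conjugate_pair_of_eigenvalues
    (V W : Type*) [AddCommGroup V] [Module ℂ V] [AddCommGroup W] [Module ℂ W]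
    (T : V →ₗ[ℂ] V) (S : W →ₗ[ℂ] W) (m : V →ₗ[ℂ] V →ₗ[ℂ] W)
    (hcompat : ∀ v₁ v₂ : V, m (T v₁) (T v₂) = S (m v₁ v₂))
    (hnz : ∀ v₁ v₂ : V, v₁ ≠ 0 → v₂ ≠ 0 → m v₁ v₂ ≠ 0)
    (hfix : ∀ w : W, S w = w → w = 0) :
    (∀ ζ : ℂ, ‖ζ‖ = 1 →
      ¬∃ v₁ v₂ : V, v₁ ≠ 0 ∧ v₂ ≠ 0 ∧ T v₁ = ζ • v₁ ∧
        T v₂ = (starRingEnd ℂ) ζ • v₂) ∧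
    ¬Module.End.HasEigenvalue T 1 ∧ ¬Module.End.HasEigenvalue T (-1) := by
  have key {a b : ℂ} (hab : a * b = 1) :=
    not_exists_eigenvectors_of_mul_eq_one hcompat hnz hfix hab
  refine ⟨fun _ hζ => key (Complex.mul_conj_eq_one_of_norm_eq_one hζ),
    fun h => ?_, fun h => ?_⟩ <;>
  · obtain ⟨v, hv0, hv⟩ := h.exists_ne_zero_apply_eq_smul
    exact key (by norm_num) ⟨v, v, hv0, hv0, hv, hv⟩
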